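/- Assume f satisfies (A), φ has the stated integrability, and (TS) holds. Fix a Borel probability measure μ on Ω and let u† ∈ L¹(μ) be a minimizer of ∫_Ω f(u) dμ subject to Φ_μ u = Y. Suppose the source condition holds: the set S := { α ∈ L²(ρ) : for μ-a.e. ω, (Φ^⊤α)(ω) is a subgradient of f at u†(ω), i.e. f(t) ≥ f(u†(ω)) + (Φ^⊤α)(ω)(t − u†(ω)) for all t ∈ ℝ } is nonempty, and let α† be the element of S of minimal L²(ρ)-norm. Then, for every λ > 0, the unique maximizer α^λ_f[μ] over L²(ρ) of α ↦ −∫_Ω f*(Φ^⊤α) dμ + ⟨α, Y⟩_{L²(ρ)} − (λ/2)‖α‖²_{L²(ρ)} satisfies ‖α^λ_f[μ]‖_{L²(ρ)} ≤ ‖α†‖_{L²(ρ)}, and α^λ_f[μ] converges strongly in L²(ρ) to α† as λ → 0⁺. -/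

import Mathlib

/-!
Everything is lifted to the Hilbert space `L²(ρ)`, where `(Φ^⊤α)(ω) = ⟪φ(ω, ·), α⟫`. The dual
objective `D α = ⟪α, Y⟫ - ∫ f*(Φ^⊤α) dμ` is concave and continuous, and since `Y = Φ_μ u†`,
the Fenchel–Young inequality gives `D ≤ ∫ f(u†) dμ`, with equality exactly at the elements
satisfying the source condition. Hence `α†` is the minimal-norm maximizer of `D`.

Comparing the Tikhonov maximizer `α^λ` of `D - λ/2 ‖·‖²` with `α†` gives `‖α^λ‖ ≤ ‖α†‖`, and
strong concavity gives `‖α^λ - α^λ'‖² ≤ 2 (‖α^λ‖² - ‖α^λ'‖²)` for `λ ≤ λ'`. So `‖α^λ‖²` increases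
as `λ ↓ 0` and `α^λ` is Cauchy; its limit maximizes `D` and has norm at most `‖α†‖`, so
`‖α^λ‖ → ‖α†‖` and `‖α^λ - α†‖² ≤ 2 (‖α†‖² - ‖α^λ‖²) → 0`.
-/

open MeasureTheory Filter Topology
open scoped ENNReal

/-- The operator `Φ⋆ : M(Ω) → L²(ρ)`. -/
noncomputable def phiStar {Ω : Type*} [MeasurableSpace Ω] {d : ℕ}
    (φ : Ω → EuclideanSpace ℝ (Fin d) → ℝ) (ν : MeasureTheory.SignedMeasure Ω)
    (x : EuclideanSpace ℝ (Fin d)) : ℝ :=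
  (∫ ω, φ ω x ∂ν.toJordanDecomposition.posPart)
    - ∫ ω, φ ω x ∂ν.toJordanDecomposition.negPart

open Set
open scoped InnerProductSpace

section L2

variable {X : Type*} [MeasurableSpace X] {ρ : Measure X}

lemma inner_toLp_eq_integral {g h : X → ℝ} (hg : MemLp g 2 ρ) (hh : MemLp h 2 ρ) :
    ⟪hg.toLp g, hh.toLp h⟫_ℝ = ∫ x, g x * h x ∂ρ := by
  rw [L2.inner_def]
  refine integral_congr_ae ?_
  filter_upwards [hg.coeFn_toLp, hh.coeFn_toLp] with x hgx hhx
  simp [hgx, hhx, mul_comm]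

lemma norm_toLp_sq_eq_integral {g : X → ℝ} (hg : MemLp g 2 ρ) :
    ‖hg.toLp g‖ ^ 2 = ∫ x, g x ^ 2 ∂ρ := by
  rw [← real_inner_self_eq_norm_sq, inner_toLp_eq_integral]
  simp only [sq]

lemma isMaxOn_toLp_iff {J : (X → ℝ) → ℝ} {Ĵ : Lp ℝ 2 ρ → ℝ}
    (hJ : ∀ β (hβ : MemLp β 2 ρ), Ĵ (hβ.toLp β) = J β) {b : X → ℝ} (hb : MemLp b 2 ρ) :
    IsMaxOn Ĵ univ (hb.toLp b) ↔ ∀ β, MemLp β 2 ρ → J β ≤ J b := by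
  refine ⟨fun h β hβ => ?_, fun h x _ => ?_⟩
  · rw [← hJ β hβ, ← hJ b hb]
    exact h (mem_univ _)
  · change Ĵ x ≤ Ĵ (hb.toLp b)
    rw [← Lp.toLp_coeFn x (Lp.memLp x), hJ, hJ]
    exact h _ (Lp.memLp x)

lemma norm_toLp_le_of_integral_sq_le {P : Lp ℝ 2 ρ → Prop} {a : X → ℝ} (ha : MemLp a 2 ρ)
    (h : ∀ β (hβ : MemLp β 2 ρ), P (hβ.toLp β) → ∫ x, a x ^ 2 ∂ρ ≤ ∫ x, β x ^ 2 ∂ρ)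
    (x : Lp ℝ 2 ρ) (hx : P x) : ‖ha.toLp a‖ ≤ ‖x‖ := by
  rw [← Lp.toLp_coeFn x (Lp.memLp x)] at hx ⊢
  have := h _ (Lp.memLp x) hx
  rw [← norm_toLp_sq_eq_integral ha, ← norm_toLp_sq_eq_integral (Lp.memLp x)] at this
  exact (pow_le_pow_iff_left₀ (norm_nonneg _) (norm_nonneg _) two_ne_zero).1 this

end L2

-- `⨆` is junk (`0`) on a range that is not bounded above, hence the hypothesis `hbdd` below.
noncomputable def legendre (f : ℝ → ℝ) (s : ℝ) : ℝ := ⨆ t, s * t - f t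

section Legendre

variable {f : ℝ → ℝ}

lemma bddAbove_range_mul_sub_of_superlinear (hf_nonneg : ∀ t, 0 ≤ f t)
    (hf_super : Tendsto (fun t => f t / |t|) (cocompact ℝ) atTop) (s : ℝ) :
    BddAbove (range fun t => s * t - f t) := by
  obtain ⟨K, hK, hKf⟩ :=
    hasBasis_cocompact.eventually_iff.1 (hf_super.eventually_ge_atTop |s|)
  obtain ⟨R, hR⟩ := hK.isBounded.subset_closedBall 0
  refine ⟨max (|s| * R) 0, ?_⟩
  rintro _ ⟨t, rfl⟩
  have hst : s * t ≤ |s| * |t| := (le_abs_self _).trans (abs_mul s t).le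
  by_cases ht : t ∈ K
  · have htR : |t| ≤ R := by simpa using hR ht
    have := mul_le_mul_of_nonneg_left htR (abs_nonneg s)
    exact le_max_of_le_left (by linarith [hf_nonneg t])
  · refine le_max_of_le_right ?_
    rcases eq_or_ne t 0 with rfl | ht0
    · simpa using hf_nonneg 0
    · have h := hKf ht
      rw [le_div_iff₀ (abs_pos.2 ht0)] at h
      linarith

variable (hbdd : ∀ s, BddAbove (range fun t => s * t - f t))
include hbdd

lemma mul_sub_le_legendre (s t : ℝ) : s * t - f t ≤ legendre f s :=
  le_ciSup (hbdd s) t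

lemma legendre_le_iff {s c : ℝ} : legendre f s ≤ c ↔ ∀ t, s * t - f t ≤ c :=
  ciSup_le_iff (hbdd s)

lemma legendre_le_iff_subgradient {s u : ℝ} :
    legendre f s ≤ s * u - f u ↔ ∀ t, f u + s * (t - u) ≤ f t := by
  rw [legendre_le_iff hbdd]
  exact forall_congr' fun t => by constructor <;> intro h <;> linarith

lemma convexOn_legendre : ConvexOn ℝ univ (legendre f) := by
  refine ⟨convex_univ, fun a _ b _ p q hp hq hpq => (legendre_le_iff hbdd).2 fun t => ?_⟩
  have ha := mul_le_mul_of_nonneg_left (mul_sub_le_legendre hbdd a t) hp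
  have hb := mul_le_mul_of_nonneg_left (mul_sub_le_legendre hbdd b t) hq
  simp only [smul_eq_mul]
  linear_combination ha + hb + f t * hpq

lemma continuous_legendre : Continuous (legendre f) :=
  continuousOn_univ.1 ((convexOn_legendre hbdd).continuousOn isOpen_univ)

end Legendre

lemma cauchy_map_nhdsGT_of_sq_dist_le {X : Type*} [PseudoMetricSpace X] {B : ℝ → X}
    {c : ℝ → ℝ} {a : ℝ} (hc : BddAbove (c '' Ioi a))
    (h : ∀ l l', a < l → l ≤ l' → dist (B l) (B l') ^ 2 ≤ c l - c l') :
    Cauchy (map B (𝓝[>] a)) := by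
  refine Metric.cauchy_iff.2 ⟨inferInstance, fun ε hε => ?_⟩
  obtain ⟨_, ⟨l₀, hl₀, rfl⟩, hl₀K⟩ := exists_lt_of_lt_csSup (nonempty_Ioi.image c)
    (sub_lt_self (sSup (c '' Ioi a)) (pow_pos hε 2))
  have hdist : ∀ l ∈ Ioc a l₀, ∀ l' ∈ Ioc a l₀, l ≤ l' → dist (B l) (B l') < ε := by
    intro l hl l' hl' hll'
    have hcl : c l ≤ sSup (c '' Ioi a) := le_csSup hc (mem_image_of_mem c hl.1)
    have hcl' : c l₀ ≤ c l' := by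
      nlinarith [h l' l₀ hl'.1 hl'.2, sq_nonneg (dist (B l') (B l₀))]
    exact lt_of_pow_lt_pow_left₀ 2 hε.le (by linarith [h l l' hl.1 hll'])
  refine ⟨B '' Ioc a l₀, image_mem_map (Ioc_mem_nhdsGT hl₀), ?_⟩
  rintro _ ⟨l, hl, rfl⟩ _ ⟨l', hl', rfl⟩
  rcases le_total l l' with hll' | hl'l
  · exact hdist l hl l' hl' hll'
  · exact dist_comm (B l) (B l') ▸ hdist l' hl' l hl hl'l

section Tikhonov

variable {E : Type*} [NormedAddCommGroup E] {D : E → ℝ} {a b : E} {l : ℝ}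

lemma tikhonov_sq_norm_le (ha : IsMaxOn D univ a) (hl : 0 < l)
    (hb : IsMaxOn (fun x => D x - l / 2 * ‖x‖ ^ 2) univ b) : ‖b‖ ^ 2 ≤ ‖a‖ ^ 2 := by
  have h₁ : D a - l / 2 * ‖a‖ ^ 2 ≤ D b - l / 2 * ‖b‖ ^ 2 := hb (mem_univ a)
  have h₂ : D b ≤ D a := ha (mem_univ b)
  nlinarith

variable [InnerProductSpace ℝ E]

lemma norm_half_smul_add_half_smul_sq (x y : E) :
    ‖(1 / 2 : ℝ) • x + (1 / 2 : ℝ) • y‖ ^ 2 = ‖x‖ ^ 2 / 2 + ‖y‖ ^ 2 / 2 - ‖x - y‖ ^ 2 / 4 := by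
  have h := parallelogram_law_with_norm ℝ x y
  rw [← smul_add, norm_smul, Real.norm_of_nonneg (by norm_num)]
  nlinarith

lemma tikhonov_strong_concavity (hD : ConcaveOn ℝ univ D)
    (hb : IsMaxOn (fun x => D x - l / 2 * ‖x‖ ^ 2) univ b) (x : E) :
    l / 4 * ‖b - x‖ ^ 2 ≤ D b - D x + l / 2 * (‖x‖ ^ 2 - ‖b‖ ^ 2) := by
  have hmid := hD.2 (mem_univ b) (mem_univ x) (by norm_num : (0 : ℝ) ≤ 1 / 2)
    (by norm_num : (0 : ℝ) ≤ 1 / 2) (by norm_num)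
  have hmax : D _ - l / 2 * ‖_‖ ^ 2 ≤ D b - l / 2 * ‖b‖ ^ 2 :=
    hb (mem_univ ((1 / 2 : ℝ) • b + (1 / 2 : ℝ) • x))
  rw [norm_half_smul_add_half_smul_sq] at hmax
  simp only [smul_eq_mul] at hmid
  linarith

lemma tikhonov_sq_norm_sub_le (hD : ConcaveOn ℝ univ D) (ha : IsMaxOn D univ a) (hl : 0 < l)
    (hb : IsMaxOn (fun x => D x - l / 2 * ‖x‖ ^ 2) univ b) :
    ‖b - a‖ ^ 2 ≤ 2 * (‖a‖ ^ 2 - ‖b‖ ^ 2) := by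
  have h₁ := tikhonov_strong_concavity hD hb a
  have h₂ : D b ≤ D a := ha (mem_univ b)
  nlinarith

variable {B : ℝ → E}

lemma tikhonov_sq_norm_sub_le_of_le (hD : ConcaveOn ℝ univ D)
    (hB : ∀ l, 0 < l → IsMaxOn (fun x => D x - l / 2 * ‖x‖ ^ 2) univ (B l)) {l' : ℝ}
    (hl : 0 < l) (hll' : l ≤ l') : ‖B l - B l'‖ ^ 2 ≤ 2 * (‖B l‖ ^ 2 - ‖B l'‖ ^ 2) := by
  rcases hll'.eq_or_lt with rfl | hll'
  · simp
  have h₁ := tikhonov_strong_concavity hD (hB l hl) (B l')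
  have h₂ := tikhonov_strong_concavity hD (hB l' (hl.trans hll')) (B l)
  rw [norm_sub_rev] at h₂
  have hΔ : 0 ≤ ‖B l‖ ^ 2 - ‖B l'‖ ^ 2 := by nlinarith [sq_nonneg ‖B l - B l'‖]
  nlinarith

theorem tendsto_tikhonov [CompleteSpace E] (hD : ConcaveOn ℝ univ D) (hDc : Continuous D)
    (ha : IsMaxOn D univ a) (ha_min : ∀ x, IsMaxOn D univ x → ‖a‖ ≤ ‖x‖)
    (hB : ∀ l, 0 < l → IsMaxOn (fun x => D x - l / 2 * ‖x‖ ^ 2) univ (B l)) :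
    Tendsto B (𝓝[>] 0) (𝓝 a) := by
  have hB_le : ∀ l, 0 < l → ‖B l‖ ^ 2 ≤ ‖a‖ ^ 2 := fun l hl =>
    tikhonov_sq_norm_le ha hl (hB l hl)
  obtain ⟨y, hy⟩ : ∃ y, Tendsto B (𝓝[>] 0) (𝓝 y) := by
    refine CompleteSpace.complete (cauchy_map_nhdsGT_of_sq_dist_le (c := fun l => 2 * ‖B l‖ ^ 2)
      ⟨2 * ‖a‖ ^ 2, ?_⟩ fun l l' hl hll' => ?_)
    · rintro _ ⟨l, hl, rfl⟩
      linarith [hB_le l hl]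
    · rw [dist_eq_norm]
      linarith [tikhonov_sq_norm_sub_le_of_le hD hB hl hll']
  have hy_max : IsMaxOn D univ y := by
    have hlow : ∀ᶠ l in 𝓝[>] 0, D a - l / 2 * ‖a‖ ^ 2 ≤ D (B l) :=
      eventually_mem_nhdsWithin.mono fun l hl => by
        have : D a - l / 2 * ‖a‖ ^ 2 ≤ D (B l) - l / 2 * ‖B l‖ ^ 2 := hB l hl (mem_univ a)
        nlinarith [sq_nonneg ‖B l‖, mem_Ioi.1 hl]
    have hlim : Tendsto (fun l => D a - l / 2 * ‖a‖ ^ 2) (𝓝[>] 0) (𝓝 (D a)) := by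
      have : Continuous fun l : ℝ => D a - l / 2 * ‖a‖ ^ 2 := by fun_prop
      simpa using (this.tendsto 0).mono_left nhdsWithin_le_nhds
    exact fun x _ => (ha (mem_univ x)).trans
      (le_of_tendsto_of_tendsto hlim ((hDc.tendsto y).comp hy) hlow)
  have hy_norm : ‖y‖ ^ 2 ≤ ‖a‖ ^ 2 :=
    le_of_tendsto (hy.norm.pow 2) (eventually_mem_nhdsWithin.mono hB_le)
  have ha_y := ha_min y hy_max
  have hsq : Tendsto (fun l => ‖B l - a‖ ^ 2) (𝓝[>] 0) (𝓝 0) := by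
    have hgap : Tendsto (fun l => 2 * (‖a‖ ^ 2 - ‖B l‖ ^ 2)) (𝓝[>] 0) (𝓝 0) := by
      convert ((hy.norm.pow 2).const_sub (‖a‖ ^ 2)).const_mul 2 using 2
      nlinarith [norm_nonneg a, norm_nonneg y]
    exact squeeze_zero' (Eventually.of_forall fun _ => sq_nonneg _)
      (eventually_mem_nhdsWithin.mono fun l hl => tikhonov_sq_norm_sub_le hD ha hl (hB l hl))
      hgap
  rw [tendsto_iff_norm_sub_tendsto_zero]
  simpa using hsq.sqrt

end Tikhonov

section DualObjective

variable {Ω E : Type*} [NormedAddCommGroup E] [InnerProductSpace ℝ E] {g : Ω → E} {C : ℝ}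

lemma abs_inner_le_of_norm_le (hg : ∀ ω, ‖g ω‖ ≤ C) {r : ℝ} {x : E} (hx : ‖x‖ ≤ r) (ω : Ω) :
    |⟪g ω, x⟫_ℝ| ≤ C * r :=
  (abs_real_inner_le_norm _ _).trans
    (mul_le_mul (hg ω) hx (norm_nonneg _) ((norm_nonneg _).trans (hg ω)))

variable {f : ℝ → ℝ}

lemma exists_bound_legendre_inner (hbdd : ∀ s, BddAbove (range fun t => s * t - f t))
    (hg : ∀ ω, ‖g ω‖ ≤ C) (r : ℝ) :
    ∃ M, ∀ ω x, ‖x‖ ≤ r → ‖legendre f ⟪g ω, x⟫_ℝ‖ ≤ M := by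
  obtain ⟨M, hM⟩ := (isCompact_Icc (a := -(C * r)) (b := C * r)).exists_bound_of_continuousOn
    (continuous_legendre hbdd).continuousOn
  exact ⟨M, fun ω x hx => hM _ (abs_le.1 (abs_inner_le_of_norm_le hg hx ω))⟩

variable [MeasurableSpace Ω] {μ : Measure Ω}

-- `g ω` stands for the feature `φ(ω, ·) ∈ L²(ρ)`, so that `⟪g ω, x⟫ = (Φ^⊤x)(ω)`.
noncomputable def dualObjective (μ : Measure Ω) (f : ℝ → ℝ) (g : Ω → E) (y x : E) : ℝ :=
  ⟪x, y⟫_ℝ - ∫ ω, legendre f ⟪g ω, x⟫_ℝ ∂μ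

def SourceCondition (μ : Measure Ω) (f : ℝ → ℝ) (g : Ω → E) (u : Ω → ℝ) (x : E) : Prop :=
  ∀ᵐ ω ∂μ, ∀ t, f (u ω) + ⟪g ω, x⟫_ℝ * (t - u ω) ≤ f t

variable {u : Ω → ℝ} {y : E}

lemma integrable_inner_mul (hg : ∀ ω, ‖g ω‖ ≤ C)
    (hg_meas : ∀ x, AEStronglyMeasurable (fun ω => ⟪g ω, x⟫_ℝ) μ) (hu : Integrable u μ) (x : E) :
    Integrable (fun ω => ⟪g ω, x⟫_ℝ * u ω) μ :=
  hu.bdd_mul (hg_meas x) (ae_of_all _ fun ω => abs_inner_le_of_norm_le hg le_rfl ω)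

variable [IsFiniteMeasure μ]

lemma integrable_legendre_inner (hbdd : ∀ s, BddAbove (range fun t => s * t - f t))
    (hg : ∀ ω, ‖g ω‖ ≤ C) (hg_meas : ∀ x, AEStronglyMeasurable (fun ω => ⟪g ω, x⟫_ℝ) μ)
    (x : E) : Integrable (fun ω => legendre f ⟪g ω, x⟫_ℝ) μ := by
  obtain ⟨M, hM⟩ := exists_bound_legendre_inner hbdd hg ‖x‖
  exact (integrable_const M).mono' ((continuous_legendre hbdd).comp_aestronglyMeasurable
    (hg_meas x)) (ae_of_all _ fun ω => hM ω x le_rfl)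

lemma continuous_dualObjective (hbdd : ∀ s, BddAbove (range fun t => s * t - f t))
    (hg : ∀ ω, ‖g ω‖ ≤ C) (hg_meas : ∀ x, AEStronglyMeasurable (fun ω => ⟪g ω, x⟫_ℝ) μ)
    (y : E) : Continuous (dualObjective μ f g y) := by
  refine continuous_iff_continuousAt.2 fun x₀ =>
    (continuous_id.inner continuous_const).continuousAt.sub ?_
  obtain ⟨M, hM⟩ := exists_bound_legendre_inner hbdd hg (‖x₀‖ + 1)
  refine continuousAt_of_dominated (bound := fun _ => M)
    (Eventually.of_forall fun x => (continuous_legendre hbdd).comp_aestronglyMeasurable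
      (hg_meas x)) ?_ (integrable_const M)
    (ae_of_all _ fun ω => ((continuous_legendre hbdd).comp
      (continuous_const.inner continuous_id)).continuousAt)
  filter_upwards [Metric.closedBall_mem_nhds x₀ one_pos] with x hx
  rw [Metric.mem_closedBall, dist_eq_norm] at hx
  exact ae_of_all _ fun ω => hM ω x (by linarith [norm_sub_norm_le x x₀])

lemma concaveOn_dualObjective (hbdd : ∀ s, BddAbove (range fun t => s * t - f t))
    (hg : ∀ ω, ‖g ω‖ ≤ C) (hg_meas : ∀ x, AEStronglyMeasurable (fun ω => ⟪g ω, x⟫_ℝ) μ)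
    (y : E) : ConcaveOn ℝ univ (dualObjective μ f g y) := by
  refine ⟨convex_univ, fun x _ z _ p q hp hq hpq => ?_⟩
  have hint := integrable_legendre_inner hbdd hg hg_meas
  have hconv : ∫ ω, legendre f ⟪g ω, p • x + q • z⟫_ℝ ∂μ
      ≤ ∫ ω, (p * legendre f ⟪g ω, x⟫_ℝ + q * legendre f ⟪g ω, z⟫_ℝ) ∂μ := by
    refine integral_mono (hint _) (((hint x).const_mul p).add ((hint z).const_mul q)) fun ω => ?_
    simpa only [inner_add_right, inner_smul_right, smul_eq_mul] using
      (convexOn_legendre hbdd).2 (mem_univ ⟪g ω, x⟫_ℝ) (mem_univ ⟪g ω, z⟫_ℝ) hp hq hpq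
  rw [integral_add ((hint x).const_mul p) ((hint z).const_mul q), integral_const_mul,
    integral_const_mul] at hconv
  simp only [dualObjective, smul_eq_mul, inner_add_left, inner_smul_left]
  simp only [RCLike.conj_to_real]
  nlinarith


lemma integral_sub_dualObjective (hbdd : ∀ s, BddAbove (range fun t => s * t - f t))
    (hg : ∀ ω, ‖g ω‖ ≤ C) (hg_meas : ∀ x, AEStronglyMeasurable (fun ω => ⟪g ω, x⟫_ℝ) μ)
    (hu : Integrable u μ) (hyu : ∀ x, ⟪x, y⟫_ℝ = ∫ ω, ⟪g ω, x⟫_ℝ * u ω ∂μ)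
    (hfu : Integrable (fun ω => f (u ω)) μ) (x : E) :
    ∫ ω, f (u ω) ∂μ - dualObjective μ f g y x
      = ∫ ω, (f (u ω) + legendre f ⟪g ω, x⟫_ℝ - ⟪g ω, x⟫_ℝ * u ω) ∂μ := by
  have hint := integrable_legendre_inner hbdd hg hg_meas x
  have hint' : Integrable (fun ω => f (u ω) + legendre f ⟪g ω, x⟫_ℝ) μ := hfu.add hint
  rw [dualObjective, hyu, integral_sub hint' (integrable_inner_mul hg hg_meas hu x),
    integral_add hfu hint]
  ring

lemma dualObjective_le (hbdd : ∀ s, BddAbove (range fun t => s * t - f t))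
    (hg : ∀ ω, ‖g ω‖ ≤ C) (hg_meas : ∀ x, AEStronglyMeasurable (fun ω => ⟪g ω, x⟫_ℝ) μ)
    (hu : Integrable u μ) (hyu : ∀ x, ⟪x, y⟫_ℝ = ∫ ω, ⟪g ω, x⟫_ℝ * u ω ∂μ)
    (hfu : Integrable (fun ω => f (u ω)) μ) (x : E) :
    dualObjective μ f g y x ≤ ∫ ω, f (u ω) ∂μ := by
  have hgap := integral_sub_dualObjective hbdd hg hg_meas hu hyu hfu x
  have : 0 ≤ ∫ ω, (f (u ω) + legendre f ⟪g ω, x⟫_ℝ - ⟪g ω, x⟫_ℝ * u ω) ∂μ :=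
    integral_nonneg fun ω => show (0 : ℝ) ≤ _ by
      linarith [mul_sub_le_legendre hbdd ⟪g ω, x⟫_ℝ (u ω)]
  linarith

lemma dualObjective_eq_iff (hbdd : ∀ s, BddAbove (range fun t => s * t - f t))
    (hg : ∀ ω, ‖g ω‖ ≤ C) (hg_meas : ∀ x, AEStronglyMeasurable (fun ω => ⟪g ω, x⟫_ℝ) μ)
    (hu : Integrable u μ) (hyu : ∀ x, ⟪x, y⟫_ℝ = ∫ ω, ⟪g ω, x⟫_ℝ * u ω ∂μ)
    (hfu : Integrable (fun ω => f (u ω)) μ) (x : E) :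
    dualObjective μ f g y x = ∫ ω, f (u ω) ∂μ ↔ SourceCondition μ f g u x := by
  have hgap_nonneg : ∀ ω, 0 ≤ f (u ω) + legendre f ⟪g ω, x⟫_ℝ - ⟪g ω, x⟫_ℝ * u ω := fun ω => by
    linarith [mul_sub_le_legendre hbdd ⟪g ω, x⟫_ℝ (u ω)]
  rw [eq_comm, ← sub_eq_zero, integral_sub_dualObjective hbdd hg hg_meas hu hyu hfu,
    integral_eq_zero_iff_of_nonneg hgap_nonneg
      ((hfu.add (integrable_legendre_inner hbdd hg hg_meas x)).sub
        (integrable_inner_mul hg hg_meas hu x))]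
  refine eventually_congr (Eventually.of_forall fun ω => ?_)
  rw [← legendre_le_iff_subgradient hbdd]
  constructor <;> intro h
  · simp only [Pi.zero_apply] at h
    linarith
  · simp only [Pi.zero_apply]
    linarith [hgap_nonneg ω]

lemma integrable_comp_of_sourceCondition (hf_nonneg : ∀ t, 0 ≤ f t) (hf_cont : Continuous f)
    (hg : ∀ ω, ‖g ω‖ ≤ C) (hg_meas : ∀ x, AEStronglyMeasurable (fun ω => ⟪g ω, x⟫_ℝ) μ)
    (hu : Integrable u μ) {x : E} (hx : SourceCondition μ f g u x) :
    Integrable (fun ω => f (u ω)) μ := by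
  refine ((integrable_const (f 0)).add (integrable_inner_mul hg hg_meas hu x)).mono'
    (hf_cont.comp_aestronglyMeasurable hu.1) ?_
  filter_upwards [hx] with ω hω
  rw [Real.norm_of_nonneg (hf_nonneg _)]
  show f (u ω) ≤ f 0 + ⟪g ω, x⟫_ℝ * u ω
  linarith [hω 0]

lemma isMaxOn_dualObjective_iff (hf_nonneg : ∀ t, 0 ≤ f t) (hf_cont : Continuous f)
    (hbdd : ∀ s, BddAbove (range fun t => s * t - f t))
    (hg : ∀ ω, ‖g ω‖ ≤ C) (hg_meas : ∀ x, AEStronglyMeasurable (fun ω => ⟪g ω, x⟫_ℝ) μ)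
    (hu : Integrable u μ) (hyu : ∀ x, ⟪x, y⟫_ℝ = ∫ ω, ⟪g ω, x⟫_ℝ * u ω ∂μ)
    {a : E} (ha : SourceCondition μ f g u a) (x : E) :
    IsMaxOn (dualObjective μ f g y) univ x ↔ SourceCondition μ f g u x := by
  have hfu := integrable_comp_of_sourceCondition hf_nonneg hf_cont hg hg_meas hu ha
  have hDa := (dualObjective_eq_iff hbdd hg hg_meas hu hyu hfu a).2 ha
  rw [← dualObjective_eq_iff hbdd hg hg_meas hu hyu hfu, isMaxOn_univ_iff]
  refine ⟨fun h => le_antisymm (dualObjective_le hbdd hg hg_meas hu hyu hfu x) (hDa ▸ h a),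
    fun h z => h ▸ dualObjective_le hbdd hg hg_meas hu hyu hfu z⟩

theorem tikhonov_dualObjective [CompleteSpace E] (hf_nonneg : ∀ t, 0 ≤ f t)
    (hf_cont : Continuous f) (hbdd : ∀ s, BddAbove (range fun t => s * t - f t))
    (hg : ∀ ω, ‖g ω‖ ≤ C) (hg_meas : ∀ x, AEStronglyMeasurable (fun ω => ⟪g ω, x⟫_ℝ) μ)
    (hu : Integrable u μ) (hyu : ∀ x, ⟪x, y⟫_ℝ = ∫ ω, ⟪g ω, x⟫_ℝ * u ω ∂μ)
    {a : E} (ha : SourceCondition μ f g u a)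
    (ha_min : ∀ x, SourceCondition μ f g u x → ‖a‖ ≤ ‖x‖) {B : ℝ → E}
    (hB : ∀ l, 0 < l →
      IsMaxOn (fun x => dualObjective μ f g y x - l / 2 * ‖x‖ ^ 2) univ (B l)) :
    (∀ l, 0 < l → ‖B l‖ ^ 2 ≤ ‖a‖ ^ 2) ∧ Tendsto B (𝓝[>] 0) (𝓝 a) := by
  have hmax := isMaxOn_dualObjective_iff hf_nonneg hf_cont hbdd hg hg_meas hu hyu ha
  exact ⟨fun l hl => tikhonov_sq_norm_le ((hmax a).2 ha) hl (hB l hl),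
    tendsto_tikhonov (concaveOn_dualObjective hbdd hg hg_meas y)
      (continuous_dualObjective hbdd hg hg_meas y) ((hmax a).2 ha)
      (fun x hx => ha_min x ((hmax x).1 hx)) hB⟩

end DualObjective

section Features

variable {Ω X : Type*} [MeasurableSpace X] {ρ : Measure X} {φ : Ω → X → ℝ}

lemma memLp_two_iSup_abs (h : Integrable (fun x => (⨆ ω, |φ ω x|) ^ 2) ρ) :
    MemLp (fun x => ⨆ ω, |φ ω x|) 2 ρ := by
  have hmeas : AEStronglyMeasurable (fun x => ⨆ ω, |φ ω x|) ρ := by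
    simpa only [Real.sqrt_sq (Real.iSup_nonneg fun ω => abs_nonneg _)] using
      Real.continuous_sqrt.comp_aestronglyMeasurable h.1
  exact (memLp_two_iff_integrable_sq hmeas).2 h

lemma ae_abs_le_iSup_abs [TopologicalSpace Ω] [CompactSpace Ω]
    (h : ∀ᵐ x ∂ρ, Continuous fun ω => φ ω x) : ∀ᵐ x ∂ρ, ∀ ω, |φ ω x| ≤ ⨆ ω, |φ ω x| := by
  filter_upwards [h] with x hx ω
  exact le_ciSup (isCompact_range hx.abs).bddAbove ω

noncomputable def featureLp (hφ : ∀ ω, MemLp (φ ω) 2 ρ) (ω : Ω) : Lp ℝ 2 ρ :=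
  (hφ ω).toLp (φ ω)

lemma inner_featureLp_toLp (hφ : ∀ ω, MemLp (φ ω) 2 ρ) {β : X → ℝ} (hβ : MemLp β 2 ρ)
    (ω : Ω) : ⟪featureLp hφ ω, hβ.toLp β⟫_ℝ = ∫ x, φ ω x * β x ∂ρ :=
  inner_toLp_eq_integral (hφ ω) hβ

lemma inner_featureLp (hφ : ∀ ω, MemLp (φ ω) 2 ρ) (β : Lp ℝ 2 ρ) (ω : Ω) :
    ⟪featureLp hφ ω, β⟫_ℝ = ∫ x, φ ω x * β x ∂ρ := by
  simpa only [Lp.toLp_coeFn] using inner_featureLp_toLp hφ (Lp.memLp β) ω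

variable {Φ : X → ℝ}

lemma norm_featureLp_le (hφ : ∀ ω, MemLp (φ ω) 2 ρ) (hΦ : MemLp Φ 2 ρ)
    (hφΦ : ∀ᵐ x ∂ρ, ∀ ω, |φ ω x| ≤ Φ x) (ω : Ω) : ‖featureLp hφ ω‖ ≤ ‖hΦ.toLp Φ‖ := by
  refine Lp.norm_le_norm_of_ae_le ?_
  filter_upwards [(hφ ω).coeFn_toLp, hΦ.coeFn_toLp, hφΦ] with x hφx hΦx hx
  rw [featureLp, hφx, hΦx]
  exact (hx ω).trans (le_abs_self _)

variable [MeasurableSpace Ω] {μ : Measure Ω} {f : ℝ → ℝ} {u : Ω → ℝ}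

lemma sourceCondition_featureLp_toLp_iff (hφ : ∀ ω, MemLp (φ ω) 2 ρ) {β : X → ℝ}
    (hβ : MemLp β 2 ρ) :
    SourceCondition μ f (featureLp hφ) u (hβ.toLp β) ↔
      ∀ᵐ ω ∂μ, ∀ t, f (u ω) + (∫ x, φ ω x * β x ∂ρ) * (t - u ω) ≤ f t := by
  simp only [SourceCondition, inner_featureLp_toLp]

lemma dualObjective_featureLp_toLp (hφ : ∀ ω, MemLp (φ ω) 2 ρ) {Y β : X → ℝ} (hY : MemLp Y 2 ρ)
    (hβ : MemLp β 2 ρ) :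
    dualObjective μ f (featureLp hφ) (hY.toLp Y) (hβ.toLp β)
      = -(∫ ω, legendre f (∫ x, φ ω x * β x ∂ρ) ∂μ) + ∫ x, β x * Y x ∂ρ := by
  simp only [dualObjective, inner_featureLp_toLp, inner_toLp_eq_integral]
  ring

lemma memLp_of_ae_abs_le (hφ : Measurable (Function.uncurry φ)) (hΦ : MemLp Φ 2 ρ)
    (hφΦ : ∀ᵐ x ∂ρ, ∀ ω, |φ ω x| ≤ Φ x) (ω : Ω) : MemLp (φ ω) 2 ρ :=
  hΦ.mono' hφ.of_uncurry_left.aestronglyMeasurable (hφΦ.mono fun _ hx => hx ω)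

lemma integrable_prod_mul_mul (hmeas : Measurable (Function.uncurry φ)) (hΦ : MemLp Φ 2 ρ)
    (hφΦ : ∀ᵐ x ∂ρ, ∀ ω, |φ ω x| ≤ Φ x) (hu : Integrable u μ) (β : Lp ℝ 2 ρ) :
    Integrable (Function.uncurry fun x ω => β x * (φ ω x * u ω)) (ρ.prod μ) := by
  have hdom : Integrable (fun p : X × Ω => (Φ p.1 * |β p.1|) * |u p.2|) (ρ.prod μ) :=
    (hΦ.integrable_mul (Lp.memLp β).abs).mul_prod hu.abs
  have hβ : AEStronglyMeasurable (fun p : X × Ω => β p.1) (ρ.prod μ) :=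
    ((Lp.stronglyMeasurable β).comp_measurable measurable_fst).aestronglyMeasurable
  refine hdom.mono' (hβ.mul ((hmeas.comp measurable_swap).aestronglyMeasurable.mul
    hu.1.comp_snd)) ?_
  filter_upwards [Measure.quasiMeasurePreserving_fst.tendsto_ae.eventually hφΦ] with ⟨x, ω⟩ hx
  simp only [Function.uncurry_apply_pair, Real.norm_eq_abs, abs_mul]
  have := mul_le_mul_of_nonneg_right (hx ω) (abs_nonneg (u ω))
  nlinarith [abs_nonneg (β x)]

variable [SFinite ρ]

lemma stronglyMeasurable_inner_featureLp (hmeas : Measurable (Function.uncurry φ))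
    (hφ : ∀ ω, MemLp (φ ω) 2 ρ) (β : Lp ℝ 2 ρ) :
    StronglyMeasurable fun ω => ⟪featureLp hφ ω, β⟫_ℝ := by
  simp only [inner_featureLp]
  exact StronglyMeasurable.integral_prod_right
    (hmeas.mul ((Lp.stronglyMeasurable β).measurable.comp measurable_snd)).stronglyMeasurable

variable [SFinite μ]

lemma inner_toLp_eq_integral_inner_featureLp_mul (hmeas : Measurable (Function.uncurry φ))
    (hφ : ∀ ω, MemLp (φ ω) 2 ρ) (hΦ : MemLp Φ 2 ρ) (hφΦ : ∀ᵐ x ∂ρ, ∀ ω, |φ ω x| ≤ Φ x)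
    (hu : Integrable u μ) {Y : X → ℝ} (hY : MemLp Y 2 ρ)
    (hYu : (fun x => ∫ ω, φ ω x * u ω ∂μ) =ᵐ[ρ] Y) (β : Lp ℝ 2 ρ) :
    ⟪β, hY.toLp Y⟫_ℝ = ∫ ω, ⟪featureLp hφ ω, β⟫_ℝ * u ω ∂μ := by
  calc ⟪β, hY.toLp Y⟫_ℝ = ∫ x, β x * Y x ∂ρ := by
        rw [← inner_toLp_eq_integral (Lp.memLp β) hY, Lp.toLp_coeFn]
    _ = ∫ x, ∫ ω, β x * (φ ω x * u ω) ∂μ ∂ρ := by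
        refine integral_congr_ae ?_
        filter_upwards [hYu] with x hx
        rw [← hx, integral_const_mul]
    _ = ∫ ω, ∫ x, β x * (φ ω x * u ω) ∂ρ ∂μ :=
        integral_integral_swap (integrable_prod_mul_mul hmeas hΦ hφΦ hu β)
    _ = ∫ ω, ⟪featureLp hφ ω, β⟫_ℝ * u ω ∂μ := by
        congr 1 with ω
        rw [inner_featureLp, ← integral_mul_const]
        congr 1 with x
        ring

end Features

theorem stmt_16_general
    {Ω : Type*} [MetricSpace Ω] [CompactSpace Ω] [MeasurableSpace Ω]
    {d : ℕ}
    (μ : Measure Ω) [IsProbabilityMeasure μ]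
    (ρ : Measure (EuclideanSpace ℝ (Fin d))) [IsProbabilityMeasure ρ]
    (Y : EuclideanSpace ℝ (Fin d) → ℝ) (hY : MemLp Y 2 ρ)
    (φ : Ω → EuclideanSpace ℝ (Fin d) → ℝ)
    (hφ_meas : Measurable (Function.uncurry φ))
    (hφ_cont : ∀ᵐ x ∂ρ, Continuous fun ω => φ ω x)
    (hφ_int : Integrable (fun x => (⨆ ω, |φ ω x|) ^ 2) ρ)
    (f : ℝ → ℝ)
    (hf_nonneg : ∀ t, 0 ≤ f t)
    (hf_conv : StrictConvexOn ℝ Set.univ f)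
    (hf_super : Tendsto (fun t : ℝ => f t / |t|) (cocompact ℝ) atTop)
    (fs : ℝ → ℝ) (hfs : ∀ s, fs s = ⨆ t : ℝ, (s * t - f t))
    -- the feature operator Φ_μ and the adjoint Φ^⊤
    (F : (Ω → ℝ) → EuclideanSpace ℝ (Fin d) → ℝ)
    (hF : ∀ u x, F u x = ∫ ω, φ ω x * u ω ∂μ)
    (T : (EuclideanSpace ℝ (Fin d) → ℝ) → Ω → ℝ)
    (hT : ∀ β ω, T β ω = ∫ x, φ ω x * β x ∂ρ)
    -- u† is a minimizer of ∫ f(u) dμ subject to Φ_μ u = Y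
    (udag : Ω → ℝ)
    (hudag_int : Integrable udag μ)
    (hudag_feas : F udag =ᵐ[ρ] Y)
    -- the source condition, and α† the minimal-norm source element
    (αdag : EuclideanSpace ℝ (Fin d) → ℝ)
    (hαdag_mem : MemLp αdag 2 ρ)
    (hαdag_src : ∀ᵐ ω ∂μ, ∀ t : ℝ, f (udag ω) + T αdag ω * (t - udag ω) ≤ f t)
    (hαdag_min : ∀ β : EuclideanSpace ℝ (Fin d) → ℝ, MemLp β 2 ρ →
      (∀ᵐ ω ∂μ, ∀ t : ℝ, f (udag ω) + T β ω * (t - udag ω) ≤ f t) →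
      (∫ x, (αdag x) ^ 2 ∂ρ) ≤ ∫ x, (β x) ^ 2 ∂ρ)
    -- α^λ_f[μ], the dual maximizers for λ > 0
    (A : ℝ → EuclideanSpace ℝ (Fin d) → ℝ)
    (hA : ∀ l : ℝ, 0 < l → MemLp (A l) 2 ρ ∧
      ∀ β, MemLp β 2 ρ →
        (-(∫ ω, fs (T β ω) ∂μ) + (∫ x, β x * Y x ∂ρ) - l / 2 * ∫ x, (β x) ^ 2 ∂ρ)
          ≤ (-(∫ ω, fs (T (A l) ω) ∂μ) + (∫ x, A l x * Y x ∂ρ)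
            - l / 2 * ∫ x, (A l x) ^ 2 ∂ρ)) :
    -- uniform norm bound and strong L²(ρ) convergence as λ → 0⁺
    (∀ l : ℝ, 0 < l → (∫ x, (A l x) ^ 2 ∂ρ) ≤ ∫ x, (αdag x) ^ 2 ∂ρ)
    ∧
    Tendsto (fun l => ∫ x, (A l x - αdag x) ^ 2 ∂ρ) (𝓝[>] (0 : ℝ)) (𝓝 0) := by
  obtain rfl : fs = legendre f := funext hfs
  obtain rfl : T = fun β ω => ∫ x, φ ω x * β x ∂ρ := funext₂ hT
  obtain rfl : F = fun u x => ∫ ω, φ ω x * u ω ∂μ := funext₂ hF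
  have hΦ := memLp_two_iSup_abs hφ_int
  have hφΦ := ae_abs_le_iSup_abs hφ_cont
  have hφ := memLp_of_ae_abs_le hφ_meas hΦ hφΦ
  set B : ℝ → Lp ℝ 2 ρ := fun l => if hl : 0 < l then (hA l hl).1.toLp (A l) else 0
  have hB : ∀ l (hl : 0 < l), B l = (hA l hl).1.toLp (A l) := fun l hl => dif_pos hl
  obtain ⟨hle, hlim⟩ := tikhonov_dualObjective (a := hαdag_mem.toLp αdag) (B := B) hf_nonneg
    (continuousOn_univ.1 (hf_conv.convexOn.continuousOn isOpen_univ))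
    (bddAbove_range_mul_sub_of_superlinear hf_nonneg hf_super) (norm_featureLp_le hφ hΦ hφΦ)
    (fun x => (stronglyMeasurable_inner_featureLp hφ_meas hφ x).aestronglyMeasurable) hudag_int
    (inner_toLp_eq_integral_inner_featureLp_mul hφ_meas hφ hΦ hφΦ hudag_int hY hudag_feas)
    ((sourceCondition_featureLp_toLp_iff hφ hαdag_mem).2 hαdag_src)
    (norm_toLp_le_of_integral_sq_le hαdag_mem fun β hβ hβ_src =>
      hαdag_min β hβ ((sourceCondition_featureLp_toLp_iff hφ hβ).1 hβ_src))
    (fun l hl => by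
      rw [hB l hl, isMaxOn_toLp_iff fun β hβ => by
        rw [dualObjective_featureLp_toLp hφ hY hβ, norm_toLp_sq_eq_integral hβ]]
      exact (hA l hl).2)
  refine ⟨fun l hl => ?_, ?_⟩
  · simpa only [hB l hl, norm_toLp_sq_eq_integral] using hle l hl
  · have := (hlim.sub_const (hαdag_mem.toLp αdag)).norm.pow 2
    rw [sub_self, norm_zero, zero_pow two_ne_zero] at this
    refine this.congr' (eventually_mem_nhdsWithin.mono fun l hl => ?_)
    rw [hB l hl, ← MemLp.toLp_sub, norm_toLp_sq_eq_integral]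
    rfl

/-- Under a source condition, the dual maximizers `α^λ_f[μ]` are
uniformly bounded by the minimal-norm source element `α†` and converge strongly to it
in `L²(ρ)` as `λ → 0⁺`. -/
theorem stmt_16
    {Ω : Type*} [MetricSpace Ω] [CompactSpace Ω] [MeasurableSpace Ω] [BorelSpace Ω]
    {d : ℕ}
    (μ : Measure Ω) [IsProbabilityMeasure μ]
    (ρ : Measure (EuclideanSpace ℝ (Fin d))) [IsProbabilityMeasure ρ]
    (Y : EuclideanSpace ℝ (Fin d) → ℝ) (hY : MemLp Y 2 ρ)
    (φ : Ω → EuclideanSpace ℝ (Fin d) → ℝ)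
    (hφ_meas : Measurable (Function.uncurry φ))
    (hφ_cont : ∀ᵐ x ∂ρ, Continuous fun ω => φ ω x)
    (hφ_int : Integrable (fun x => (⨆ ω, |φ ω x|) ^ 2) ρ)
    (f : ℝ → ℝ)
    (hf_nonneg : ∀ t, 0 ≤ f t)
    (hf_conv : StrictConvexOn ℝ Set.univ f)
    (hf_super : Tendsto (fun t : ℝ => f t / |t|) (cocompact ℝ) atTop)
    (fs : ℝ → ℝ) (hfs : ∀ s, fs s = ⨆ t : ℝ, (s * t - f t))
    -- teacher–student assumption (TS)
    (νbar : SignedMeasure Ω)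
    (hTS : phiStar φ νbar =ᵐ[ρ] Y)
    (hinj : ∀ ν₁ ν₂ : SignedMeasure Ω,
      phiStar φ ν₁ =ᵐ[ρ] phiStar φ ν₂ → ν₁ = ν₂)
    -- the feature operator Φ_μ and the adjoint Φ^⊤
    (F : (Ω → ℝ) → EuclideanSpace ℝ (Fin d) → ℝ)
    (hF : ∀ u x, F u x = ∫ ω, φ ω x * u ω ∂μ)
    (T : (EuclideanSpace ℝ (Fin d) → ℝ) → Ω → ℝ)
    (hT : ∀ β ω, T β ω = ∫ x, φ ω x * β x ∂ρ)
    -- u† is a minimizer of ∫ f(u) dμ subject to Φ_μ u = Y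
    (udag : Ω → ℝ)
    (hudag_int : Integrable udag μ)
    (hudag_feas : F udag =ᵐ[ρ] Y)
    (hudag_min : ∀ u : Ω → ℝ, Integrable u μ → F u =ᵐ[ρ] Y →
      (∫⁻ ω, ENNReal.ofReal (f (udag ω)) ∂μ) ≤ ∫⁻ ω, ENNReal.ofReal (f (u ω)) ∂μ)
    -- the source condition, and α† the minimal-norm source element
    (αdag : EuclideanSpace ℝ (Fin d) → ℝ)
    (hαdag_mem : MemLp αdag 2 ρ)
    (hαdag_src : ∀ᵐ ω ∂μ, ∀ t : ℝ, f (udag ω) + T αdag ω * (t - udag ω) ≤ f t)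
    (hαdag_min : ∀ β : EuclideanSpace ℝ (Fin d) → ℝ, MemLp β 2 ρ →
      (∀ᵐ ω ∂μ, ∀ t : ℝ, f (udag ω) + T β ω * (t - udag ω) ≤ f t) →
      (∫ x, (αdag x) ^ 2 ∂ρ) ≤ ∫ x, (β x) ^ 2 ∂ρ)
    -- α^λ_f[μ], the dual maximizers for λ > 0
    (A : ℝ → EuclideanSpace ℝ (Fin d) → ℝ)
    (hA : ∀ l : ℝ, 0 < l → MemLp (A l) 2 ρ ∧
      ∀ β, MemLp β 2 ρ →
        (-(∫ ω, fs (T β ω) ∂μ) + (∫ x, β x * Y x ∂ρ) - l / 2 * ∫ x, (β x) ^ 2 ∂ρ)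
          ≤ (-(∫ ω, fs (T (A l) ω) ∂μ) + (∫ x, A l x * Y x ∂ρ)
            - l / 2 * ∫ x, (A l x) ^ 2 ∂ρ)) :
    -- uniform norm bound and strong L²(ρ) convergence as λ → 0⁺
    (∀ l : ℝ, 0 < l → (∫ x, (A l x) ^ 2 ∂ρ) ≤ ∫ x, (αdag x) ^ 2 ∂ρ)
    ∧
    Tendsto (fun l => ∫ x, (A l x - αdag x) ^ 2 ∂ρ) (𝓝[>] (0 : ℝ)) (𝓝 0) :=
  stmt_16_general μ ρ Y hY φ hφ_meas hφ_cont hφ_int f hf_nonneg hf_conv hf_super fs hfs F hF T hT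
    udag hudag_int hudag_feas αdag hαdag_mem hαdag_src hαdag_min A hA
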